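/- Let Q : ℕ → ℝ satisfy Q(2) = 1 and, for all integers n ≥ 3, Q(n) = Q(n−1) − (2·(n−2)/n²)·Q(n−1)². Then for all n ≥ 2, Q(n) ≤ 1/(H_n − 1), where H_n = ∑_{k=1}^n 1/k is the n-th harmonic number. -/

import Mathlib

/-!
Write `S = H_{m-1} - 1` and `c = 2(m-2)/m²`, so that `Q(m) = f(Q(m-1))` with `f x = x - c x²`.
Since `4c ≤ 1` and `1/S ≤ 2`, the map `f` is increasing on `(-∞, 1/S]`, so the invariant
`Q(m-1) ≤ 1/S` gives `Q(m) ≤ f(1/S)`. Finally `f(1/S) ≤ 1/(S + 1/m) = 1/(H_m - 1)` reduces to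
`S ≤ c(mS + 1)`, which holds because `S ≤ (m-2)/2`.
-/

open Finset

theorem sub_mul_sq_le_sub_mul_sq {c x y : ℝ} (hc : 0 ≤ c) (hxy : x ≤ y) (hy : 2 * c * y ≤ 1) :
    x - c * x ^ 2 ≤ y - c * y ^ 2 := by
  have hcx : c * x ≤ c * y := mul_le_mul_of_nonneg_left hxy hc
  nlinarith [mul_nonneg (sub_nonneg.2 hxy) (show 0 ≤ 1 - c * (x + y) by linarith)]

theorem one_div_sub_mul_sq_le_one_div_add {c S m : ℝ} (hS : 0 < S) (hm : 0 < m)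
    (h : S ≤ c * (m * S + 1)) :
    1 / S - c * (1 / S) ^ 2 ≤ 1 / (S + 1 / m) := by
  rw [show 1 / S - c * (1 / S) ^ 2 = (S - c) / S ^ 2 by field_simp,
    show 1 / (S + 1 / m) = m / (m * S + 1) by field_simp,
    div_le_div_iff₀ (by positivity) (by positivity)]
  nlinarith

theorem sum_Icc_one_div_succ (n : ℕ) :
    ∑ k ∈ Icc 1 (n + 1), (1 : ℝ) / k = ∑ k ∈ Icc 1 n, (1 : ℝ) / k + 1 / (n + 1) := by
  rw [sum_Icc_succ_top (by omega)]
  push_cast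
  rfl

theorem three_halves_le_sum_Icc_one_div {n : ℕ} (hn : 2 ≤ n) :
    3 / 2 ≤ ∑ k ∈ Icc 1 n, (1 : ℝ) / k := by
  induction n, hn using Nat.le_induction with
  | base => norm_num [show Icc 1 2 = {1, 2} by rfl]
  | succ n _ ih =>
    rw [sum_Icc_one_div_succ]
    linarith [show (0 : ℝ) ≤ 1 / (n + 1) by positivity]

theorem sum_Icc_one_div_le {n : ℕ} (hn : 1 ≤ n) :
    ∑ k ∈ Icc 1 n, (1 : ℝ) / k ≤ (n + 1) / 2 := by
  induction n, hn using Nat.le_induction with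
  | base => norm_num
  | succ n hn ih =>
    rw [sum_Icc_one_div_succ]
    have : (1 : ℝ) / (n + 1) ≤ 1 / 2 := by
      gcongr
      exact_mod_cast Nat.succ_le_succ hn
    push_cast
    linarith

theorem sub_two_mul_sub_two_div_sq_mul_sq_le {S m x : ℝ} (hS : 1 / 2 ≤ S)
    (hSm : S ≤ (m - 2) / 2) (hx : x ≤ 1 / S) :
    x - 2 * (m - 2) / m ^ 2 * x ^ 2 ≤ 1 / (S + 1 / m) := by
  set c := 2 * (m - 2) / m ^ 2 with hc
  have hm : 0 < m := by linarith
  have hc0 : 0 ≤ c := div_nonneg (by linarith) (by positivity)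
  have hc4 : 4 * c ≤ 1 := by
    rw [hc, mul_div_assoc', div_le_one (by positivity)]
    nlinarith [sq_nonneg (m - 4)]
  have hinvS : 1 / S ≤ 2 := by rw [div_le_iff₀ (by linarith)]; linarith
  -- Equivalent to `m S (4 - m) ≤ 2(m - 2)`: trivial for `m ≥ 4`, and for `m < 4` it follows
  -- from `S ≤ (m - 2)/2` and `m (4 - m) ≤ 4`.
  have hgrowth : S ≤ c * (m * S + 1) := by
    rw [hc, div_mul_eq_mul_div, le_div_iff₀ (by positivity)]
    nlinarith [sq_nonneg (m - 2), mul_nonneg (sub_nonneg.2 hSm) (sq_nonneg (m - 4))]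
  calc x - c * x ^ 2 ≤ 1 / S - c * (1 / S) ^ 2 :=
        sub_mul_sq_le_sub_mul_sq hc0 hx (by nlinarith)
    _ ≤ 1 / (S + 1 / m) := one_div_sub_mul_sq_le_one_div_add (by linarith) hm hgrowth

/-- Under the optimized recurrence `Q(n) = Q(n−1) − (2(n−2)/n²)·Q(n−1)²` with
`Q(2) = 1`, we have `Q(n) ≤ 1/(H_n − 1)` for all `n ≥ 2`. -/
theorem optimized_Q_upper_bound (Q : ℕ → ℝ) (hQ2 : Q 2 = 1)
    (hrec : ∀ n : ℕ, 3 ≤ n →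
      Q n = Q (n - 1) - (2 * ((n : ℝ) - 2) / (n : ℝ) ^ 2) * Q (n - 1) ^ 2) :
    ∀ n : ℕ, 2 ≤ n →
      Q n ≤ 1 / ((∑ k ∈ Finset.Icc 1 n, (1 : ℝ) / k) - 1) := by
  intro n hn
  induction n, hn using Nat.le_induction with
  | base => norm_num [hQ2, show Icc 1 2 = {1, 2} by rfl]
  | succ n hn ih =>
    have hS := three_halves_le_sum_Icc_one_div hn
    have hSm := sum_Icc_one_div_le (n := n) (by omega)
    rw [hrec (n + 1) (by omega), Nat.add_sub_cancel, sum_Icc_one_div_succ, add_sub_right_comm]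
    push_cast
    exact sub_two_mul_sub_two_div_sq_mul_sq_le (by linarith) (by linarith) ih
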